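/- arXiv:1407.2176 — 3 statements merged into one kernel-verified Lean document; each statement's English description precedes it below -/
import Mathlib

section
/- Let ρ: ℝ≥0 → ℝ≥0 be continuous, nondecreasing, with ρ(0)=0 and sup ρ = 1, and strictly increasing on {u : ρ(u) < 1}. Let m_1,...,m_n ≥ 0 be not all zero, and let b ∈ (0,1) satisfy (1/n)·#{i : m_i > 0} > b. Then there exists a unique s > 0 such that (1/n)·Σ_{i=1}^n ρ(m_i/s) = b. -/
/-- Existence and uniqueness of the M-scale: if `ρ` satisfies A1–A5, the `m i ≥ 0`
are not all zero, and `b ∈ (0,1)` with `(1/n)·#{i : m i > 0} > b`, then there is a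
unique `s > 0` with `(1/n) ∑ i ρ(m i / s) = b`. -/
theorem stmt1 (ρ : ℝ → ℝ)
    (hA1 : ρ 0 = 0)
    (hA2 : MonotoneOn ρ (Set.Ici 0))
    (hA3 : ContinuousOn ρ (Set.Ici 0))
    (hA4 : sSup (ρ '' Set.Ici 0) = 1)
    (hA5 : ∀ u v : ℝ, 0 ≤ u → u < v → ρ u < 1 → ρ u < ρ v)
    (n : ℕ) (hn : 0 < n) (m : Fin n → ℝ)
    (hm : ∀ i, 0 ≤ m i) (hne : ∃ i, m i ≠ 0)
    (b : ℝ) (hb0 : 0 < b) (hb1 : b < 1)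
    (hfrac : b < (({i : Fin n | 0 < m i}.ncard : ℝ) / n)) :
    ∃! s : ℝ, 0 < s ∧ (1 / n : ℝ) * ∑ i, ρ (m i / s) = b := by
  have hn' : (0:ℝ) < n := by exact_mod_cast hn
  have hρ0 : ∀ x : ℝ, 0 ≤ x → 0 ≤ ρ x := by
    intro x hx
    have := hA2 (Set.self_mem_Ici) hx hx
    rw [hA1] at this; exact this
  -- the set of indices with positive m
  set S : Finset (Fin n) := Finset.univ.filter (fun i => 0 < m i) with hS
  have hset : {i : Fin n | 0 < m i} = ↑S := by
    ext i; simp [hS]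
  have hScard : ({i : Fin n | 0 < m i}.ncard : ℝ) = (S.card : ℝ) := by
    rw [hset, Set.ncard_coe_finset]
  have hbk : b * n < (S.card : ℝ) := by
    rw [hScard] at hfrac
    exact (lt_div_iff₀ hn').mp hfrac
  have hSne : S.Nonempty := by
    obtain ⟨i, hi⟩ := hne
    exact ⟨i, by simp [hS, lt_of_le_of_ne (hm i) (Ne.symm hi)]⟩
  have hk0 : (0:ℝ) < S.card := by exact_mod_cast Finset.card_pos.mpr hSne
  have hEq : ∀ x : ℝ, ((1/(n:ℝ)) * x = b ↔ x = b * n) := by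
    intro x
    constructor <;> intro h
    · field_simp at h; linarith
    · rw [h]; field_simp
  -- uniqueness key lemma
  have key : ∀ s t : ℝ, 0 < s → s < t →
      (∑ i, ρ (m i / s)) = b * n → (∑ i, ρ (m i / t)) = b * n → False := by
    intro s t hs hst h1 h2
    have ht : 0 < t := hs.trans hst
    have hle : ∀ i, ρ (m i / t) ≤ ρ (m i / s) := by
      intro i
      apply hA2 (div_nonneg (hm i) ht.le) (div_nonneg (hm i) hs.le)
      rw [div_le_div_iff₀ ht hs]
      nlinarith [hm i]
    by_cases hcase : ∃ j ∈ S, ρ (m j / t) < 1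
    · obtain ⟨j, hjS, hj1⟩ := hcase
      have hmj : 0 < m j := (Finset.mem_filter.mp hjS).2
      have hdiv : m j / t < m j / s := by
        rw [div_lt_div_iff₀ ht hs]
        nlinarith
      have hlt : ρ (m j / t) < ρ (m j / s) :=
        hA5 _ _ (div_nonneg hmj.le ht.le) hdiv hj1
      have := Finset.sum_lt_sum (fun i (_ : i ∈ Finset.univ) => hle i)
        ⟨j, Finset.mem_univ j, hlt⟩
      linarith
    · push_neg at hcase
      have hge : (S.card : ℝ) ≤ ∑ i, ρ (m i / t) := by
        calc (S.card : ℝ) = ∑ _j ∈ S, (1:ℝ) := by simp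
          _ ≤ ∑ j ∈ S, ρ (m j / t) := Finset.sum_le_sum (fun j hj => hcase j hj)
          _ ≤ ∑ i, ρ (m i / t) :=
            Finset.sum_le_sum_of_subset_of_nonneg (Finset.subset_univ S)
              (fun i _ _ => hρ0 _ (div_nonneg (hm i) ht.le))
      linarith
  -- existence: lower bound at small s₀
  have hbdd : BddAbove (ρ '' Set.Ici 0) := by
    by_contra h
    rw [Real.sSup_of_not_bddAbove h] at hA4
    norm_num at hA4
  have hρ1 : ∀ x : ℝ, 0 ≤ x → ρ x ≤ 1 := by
    intro x hx
    rw [← hA4]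
    exact le_csSup hbdd ⟨x, hx, rfl⟩
  have hlt1 : b * n / S.card < sSup (ρ '' Set.Ici 0) := by
    rw [hA4]; exact (div_lt_one hk0).mpr hbk
  obtain ⟨y, hy, hy'⟩ := exists_lt_of_lt_csSup
    ⟨ρ 0, Set.mem_image_of_mem ρ Set.self_mem_Ici⟩ hlt1
  obtain ⟨u₀, hu₀, rfl⟩ := hy
  obtain ⟨i₀, hi₀S, hi₀min⟩ := S.exists_min_image m hSne
  have hc : 0 < m i₀ := (Finset.mem_filter.mp hi₀S).2
  have hu₀1 : (0:ℝ) < u₀ + 1 := by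
    have : (0:ℝ) ≤ u₀ := hu₀
    linarith
  set s₀ : ℝ := m i₀ / (u₀ + 1) with hs₀def
  have hs₀ : 0 < s₀ := div_pos hc hu₀1
  have hbig : ∀ i ∈ S, u₀ ≤ m i / s₀ := by
    intro i hi
    have hmi : m i₀ ≤ m i := hi₀min i hi
    have : m i₀ / s₀ = u₀ + 1 := by
      rw [hs₀def]; field_simp
    have h2 : m i₀ / s₀ ≤ m i / s₀ := by gcongr
    linarith [this ▸ h2]
  have hlow : b * n < ∑ i, ρ (m i / s₀) := by
    have step1 : b * n < ρ u₀ * S.card := by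
      have := mul_lt_mul_of_pos_right hy' hk0
      calc b * n = (b * n / S.card) * S.card := by field_simp
        _ < ρ u₀ * S.card := this
    calc b * n < ρ u₀ * S.card := step1
      _ = ∑ _j ∈ S, ρ u₀ := by rw [Finset.sum_const, nsmul_eq_mul, mul_comm]
      _ ≤ ∑ j ∈ S, ρ (m j / s₀) := Finset.sum_le_sum (fun j hj =>
          hA2 hu₀ (div_nonneg (hm j) hs₀.le) (hbig j hj))
      _ ≤ ∑ i, ρ (m i / s₀) :=
          Finset.sum_le_sum_of_subset_of_nonneg (Finset.subset_univ S)
            (fun i _ _ => hρ0 _ (div_nonneg (hm i) hs₀.le))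
  -- upper bound at large s₁
  have hcont0 : ContinuousWithinAt ρ (Set.Ici 0) 0 := hA3 0 Set.self_mem_Ici
  obtain ⟨δ, hδ, hδ'⟩ := Metric.continuousWithinAt_iff.mp hcont0 b hb0
  have hNe : Nonempty (Fin n) := ⟨⟨0, hn⟩⟩
  have huniv : (Finset.univ : Finset (Fin n)).Nonempty := Finset.univ_nonempty
  set M : ℝ := Finset.univ.sup' huniv m with hMdef
  have hM : ∀ i, m i ≤ M := fun i => Finset.le_sup' m (Finset.mem_univ i)
  have hM0 : 0 ≤ M := le_trans (hm ⟨0, hn⟩) (hM ⟨0, hn⟩)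
  set s₁ : ℝ := max s₀ ((M + 1) / δ) with hs₁def
  have hs₀s₁ : s₀ ≤ s₁ := le_max_left _ _
  have hs₁ : 0 < s₁ := lt_of_lt_of_le hs₀ hs₀s₁
  have hsmall : ∀ i, m i / s₁ < δ := by
    intro i
    rw [div_lt_iff₀ hs₁]
    have h1 : (M + 1) / δ ≤ s₁ := le_max_right _ _
    have h2 : δ * ((M + 1) / δ) = M + 1 := by field_simp
    nlinarith [hM i, mul_le_mul_of_nonneg_left h1 hδ.le]
  have hhigh : ∑ i, ρ (m i / s₁) < b * n := by
    have hterm : ∀ i : Fin n, ρ (m i / s₁) < b := by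
      intro i
      have hx : m i / s₁ ∈ Set.Ici (0:ℝ) := div_nonneg (hm i) hs₁.le
      have := hδ' hx (by rw [Real.dist_eq, sub_zero, abs_of_nonneg (Set.mem_Ici.mp hx)]; exact hsmall i)
      rw [hA1, Real.dist_eq, sub_zero] at this
      exact lt_of_le_of_lt (le_abs_self _) this
    calc ∑ i, ρ (m i / s₁) < ∑ _i : Fin n, b :=
        Finset.sum_lt_sum_of_nonempty huniv (fun i _ => hterm i)
      _ = b * n := by simp [Finset.sum_const, Finset.card_univ]; ring
  -- continuity of the sum on [s₀, s₁]
  have hcont : ContinuousOn (fun s => ∑ i, ρ (m i / s)) (Set.Icc s₀ s₁) := by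
    apply continuousOn_finset_sum
    intro i _
    apply hA3.comp
    · exact ContinuousOn.div continuousOn_const continuousOn_id
        (fun s hs => ne_of_gt (lt_of_lt_of_le hs₀ hs.1))
    · intro s hs
      exact div_nonneg (hm i) (le_of_lt (lt_of_lt_of_le hs₀ hs.1))
  -- intermediate value theorem
  have hmem : b * n ∈ Set.Icc ((fun s => ∑ i, ρ (m i / s)) s₁)
      ((fun s => ∑ i, ρ (m i / s)) s₀) := ⟨hhigh.le, hlow.le⟩
  obtain ⟨s, hsmem, hFs⟩ := intermediate_value_Icc' hs₀s₁ hcont hmem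
  have hspos : 0 < s := lt_of_lt_of_le hs₀ hsmem.1
  refine ⟨s, ⟨hspos, (hEq _).mpr hFs⟩, ?_⟩
  rintro y ⟨hy, hFy⟩
  have hFy' : (∑ i, ρ (m i / y)) = b * n := (hEq _).mp hFy
  rcases lt_trichotomy y s with h | h | h
  · exact absurd (key y s hy h hFy' hFs) (fun h => h)
  · exact h
  · exact absurd (key s y hspos h hFs hFy') (fun h => h)
end

section
/- Let Σ(1,γ) and Σ(1,γ0) be p×p positive definite matrices with p ≥ 2. If for every pair (j,l) with 1 ≤ j < l ≤ p the 2×2 submatrices satisfy Σ_{jl}(1,γ) = α_{jl}·Σ_{jl}(1,γ0) for some scalars α_{jl} > 0, then all α_{jl} are equal to a common value α, and hence Σ(1,γ) = α·Σ(1,γ0). -/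
/-! Each scale `α_{jl}` is forced to be `S j j / T j j = S l l / T l l`, so the diagonal ratio
`S i i / T i i` does not depend on `i`; every entry of `S` is then that common ratio times the
corresponding entry of `T`. -/

namespace Matrix

variable {ι K : Type*} [LinearOrder ι] [Field K]

def PairwiseProportional (S T : Matrix ι ι K) : Prop :=
  ∀ j l : ι, j < l → ∃ α : K,
    S j j = α * T j j ∧ S j l = α * T j l ∧ S l j = α * T l j ∧ S l l = α * T l l

namespace PairwiseProportional

variable {S T : Matrix ι ι K} {j l : ι}

theorem diag_div_eq_of_lt (h : PairwiseProportional S T) (hT : ∀ i, T i i ≠ 0) (hjl : j < l) :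
    S j j / T j j = S l l / T l l := by
  obtain ⟨α, hjj, -, -, hll⟩ := h j l hjl
  rw [← eq_div_of_mul_eq (hT j) hjj.symm, ← eq_div_of_mul_eq (hT l) hll.symm]

theorem apply_eq_diag_div_mul_of_lt (h : PairwiseProportional S T) (hT : ∀ i, T i i ≠ 0)
    (hjl : j < l) : S j l = S j j / T j j * T j l ∧ S l j = S j j / T j j * T l j := by
  obtain ⟨α, hjj, hjl', hlj, -⟩ := h j l hjl
  rw [← eq_div_of_mul_eq (hT j) hjj.symm]
  exact ⟨hjl', hlj⟩

theorem diag_div_eq (h : PairwiseProportional S T) (hT : ∀ i, T i i ≠ 0) (j l : ι) :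
    S j j / T j j = S l l / T l l := by
  rcases lt_trichotomy j l with hjl | rfl | hlj
  · exact h.diag_div_eq_of_lt hT hjl
  · rfl
  · exact (h.diag_div_eq_of_lt hT hlj).symm

theorem eq_smul (h : PairwiseProportional S T) (hT : ∀ i, T i i ≠ 0) (i : ι) :
    S = (S i i / T i i) • T := by
  ext j l
  rw [smul_apply, smul_eq_mul]
  rcases lt_trichotomy j l with hjl | rfl | hlj
  · rw [← h.diag_div_eq hT j i]
    exact (h.apply_eq_diag_div_mul_of_lt hT hjl).1
  · rw [← h.diag_div_eq hT j i, div_mul_cancel₀ _ (hT j)]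
  · rw [← h.diag_div_eq hT l i]
    exact (h.apply_eq_diag_div_mul_of_lt hT hlj).2

end PairwiseProportional

end Matrix

/-- If all `2×2` principal submatrices (for pairs `j < l`) of two `p×p` positive definite
matrices (`p ≥ 2`) are proportional with positive constants `α_{jl}`, then all the `α_{jl}`
coincide and the matrices are globally proportional. -/
theorem stmt6 (p : ℕ) (hp : 2 ≤ p) (S T : Matrix (Fin p) (Fin p) ℝ)
    (hS : S.PosDef) (hT : T.PosDef)
    (h : ∀ j l : Fin p, j < l → ∃ α : ℝ, 0 < α ∧
      S j j = α * T j j ∧ S j l = α * T j l ∧ S l j = α * T l j ∧ S l l = α * T l l) :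
    ∃ α : ℝ, 0 < α ∧
      (∀ j l : Fin p, j < l →
        S j j = α * T j j ∧ S j l = α * T j l ∧ S l j = α * T l j ∧ S l l = α * T l l) ∧
      S = α • T := by
  have hprop : S.PairwiseProportional T := fun j l hjl => (h j l hjl).imp fun _ hα => hα.2
  let i₀ : Fin p := ⟨0, by omega⟩
  have hST : S = (S i₀ i₀ / T i₀ i₀) • T :=
    hprop.eq_smul (fun i => (hT.diag_pos (i := i)).ne') i₀
  have hentry (j l : Fin p) : S j l = S i₀ i₀ / T i₀ i₀ * T j l := congrFun (congrFun hST j) l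
  exact ⟨S i₀ i₀ / T i₀ i₀, div_pos hS.diag_pos hT.diag_pos,
    fun j l _ => ⟨hentry j j, hentry j l, hentry l j, hentry l l⟩, hST⟩
end

section
/- Scale equivariance of the composite τ-estimator: if y_i' = ζ y_i for a scalar ζ ≠ 0 and all i, then the minimizers satisfy β̂' = ζβ̂, γ̂' = γ̂, and the pairwise τ-scales satisfy τ'_{jl}(ζβ, γ) = ζ²·τ_{jl}(β,γ). -/
open Matrix

/-- Scale equivariance of the composite τ-estimator: if `y_i' = ζ y_i` with `ζ ≠ 0`, then
the pairwise τ-scales satisfy `τ'_{jl}(ζβ,γ) = ζ²·τ_{jl}(β,γ)`, and any minimizer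
`(β̂,γ̂)` of the loss for `(y,x)` yields the minimizer `(ζβ̂,γ̂)` for `(y',x)`. -/
theorem stmt19 (n p k J : ℕ) (hn : 0 < n)
    (ρ1 ρ2 : ℝ → ℝ) (b : ℝ) (ζ : ℝ) (hζ : ζ ≠ 0)
    (y : Fin n → Fin p → ℝ) (x : Fin n → Matrix (Fin p) (Fin k) ℝ)
    -- determinant-normalized pairwise covariance matrices Σ*_{jl}(γ)
    (Ss : (Fin J → ℝ) → Fin p → Fin p → Matrix (Fin 2) (Fin 2) ℝ)
    -- the M-scale functional, satisfying the defining equation and the homogeneity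
    -- property s(ζ²m₁,...,ζ²mₙ) = ζ²·s(m₁,...,mₙ)
    (sfun : (Fin n → ℝ) → ℝ)
    (hsfun : ∀ v : Fin n → ℝ, (1 / n : ℝ) * ∑ i, ρ1 (v i / sfun v) = b)
    (hshom : ∀ v : Fin n → ℝ, sfun (fun i => ζ ^ 2 * v i) = ζ ^ 2 * sfun v)
    -- pairwise squared Mahalanobis distances
    (md : (Fin n → Fin p → ℝ) → (Fin k → ℝ) → (Fin J → ℝ) → Fin n → Fin p → Fin p → ℝ)
    (hmd : ∀ Y β γ i j l, md Y β γ i j l =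
      (fun t : Fin 2 => Y i (![j, l] t) - (x i *ᵥ β) (![j, l] t)) ⬝ᵥ
        ((Ss γ j l)⁻¹ *ᵥ fun t : Fin 2 => Y i (![j, l] t) - (x i *ᵥ β) (![j, l] t)))
    -- pairwise τ-scales and composite τ loss
    (τ : (Fin n → Fin p → ℝ) → (Fin k → ℝ) → (Fin J → ℝ) → Fin p → Fin p → ℝ)
    (hτ : ∀ Y β γ j l, τ Y β γ j l =
      sfun (fun i => md Y β γ i j l) *
        ((1 / n : ℝ) * ∑ i, ρ2 (md Y β γ i j l / sfun (fun i' => md Y β γ i' j l))))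
    (T : (Fin n → Fin p → ℝ) → (Fin k → ℝ) → (Fin J → ℝ) → ℝ)
    (hT : ∀ Y β γ, T Y β γ =
      ∑ q ∈ Finset.univ.filter (fun q : Fin p × Fin p => q.1 < q.2), τ Y β γ q.1 q.2)
    (y' : Fin n → Fin p → ℝ) (hy' : ∀ i, y' i = ζ • y i) :
    (∀ (β : Fin k → ℝ) (γ : Fin J → ℝ) (j l : Fin p),
      τ y' (ζ • β) γ j l = ζ ^ 2 * τ y β γ j l) ∧
    ∀ (βh : Fin k → ℝ) (γh : Fin J → ℝ),
      (∀ β γ, T y βh γh ≤ T y β γ) →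
      ∀ β γ, T y' (ζ • βh) γh ≤ T y' β γ := by

  -- key: md scales by ζ²
  have hmd2 : ∀ β γ i j l, md y' (ζ • β) γ i j l = ζ ^ 2 * md y β γ i j l := by
    intro β γ i j l
    rw [hmd, hmd]
    have hv : (fun t : Fin 2 => y' i (![j, l] t) - (x i *ᵥ (ζ • β)) (![j, l] t)) =
        ζ • (fun t : Fin 2 => y i (![j, l] t) - (x i *ᵥ β) (![j, l] t)) := by
      funext t
      simp [hy' i, Matrix.mulVec_smul, Pi.smul_apply, smul_eq_mul, mul_sub]
    rw [hv, Matrix.mulVec_smul, dotProduct_smul, smul_dotProduct]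
    simp only [smul_eq_mul, pow_two]
    ring
  have hτ2 : ∀ (β : Fin k → ℝ) (γ : Fin J → ℝ) (j l : Fin p),
      τ y' (ζ • β) γ j l = ζ ^ 2 * τ y β γ j l := by
    intro β γ j l
    rw [hτ, hτ]
    have h1 : (fun i => md y' (ζ • β) γ i j l) = fun i => ζ ^ 2 * md y β γ i j l := by
      funext i; exact hmd2 β γ i j l
    rw [h1, hshom]
    have h2 : ∀ i : Fin n, ζ ^ 2 * md y β γ i j l / (ζ ^ 2 * sfun fun i' => md y β γ i' j l)
        = md y β γ i j l / sfun (fun i' => md y β γ i' j l) := by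
      intro i
      rw [mul_div_mul_left _ _ (pow_ne_zero 2 hζ)]
    simp only [hmd2, h2]
    ring
  refine ⟨hτ2, ?_⟩
  intro βh γh hmin β γ
  have hT2 : ∀ β γ, T y' (ζ • β) γ = ζ ^ 2 * T y β γ := by
    intro β γ
    rw [hT, hT, Finset.mul_sum]
    exact Finset.sum_congr rfl fun q _ => hτ2 β γ q.1 q.2
  have hβ : β = ζ • (ζ⁻¹ • β) := by rw [smul_smul, mul_inv_cancel₀ hζ, one_smul]
  calc T y' (ζ • βh) γh = ζ ^ 2 * T y βh γh := hT2 βh γh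
    _ ≤ ζ ^ 2 * T y (ζ⁻¹ • β) γ := by
        exact mul_le_mul_of_nonneg_left (hmin _ _) (sq_nonneg ζ)
    _ = T y' (ζ • (ζ⁻¹ • β)) γ := (hT2 _ _).symm
    _ = T y' β γ := by rw [← hβ]
end
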